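/- arXiv:1006.3706 — 2 statements merged into one kernel-verified Lean document; each statement's English description precedes it below -/
import Mathlib

section
/- Let u₁, u₂, u₃ be the roots of λ³ - λ² - t = 0 for t ≠ 0, t small. Then the sum 1/t + Σ_{j=1,2} (1 - 4u_j)³ / (u_j²(2 - 3u_j)), where u₁, u₂ are the two roots converging to 0 as t → 0, converges to 37 as t → 0. -/
open Filter Topology

private lemma key (a b : ℂ) (ha : a ≠ 0) (hb : b ≠ 0) (ha1 : a - 1 ≠ 0) (hb1 : b - 1 ≠ 0)
    (h2a : (2:ℂ) - 3*a ≠ 0) (h2b : (2:ℂ) - 3*b ≠ 0) (hc : (1:ℂ) - a - b ≠ 0)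
    (hR : a^2 + a*b + b^2 = a + b) :
    1/(a^2*(a-1)) + (1-4*a)^3/(a^2*(2-3*a)) + (1-4*b)^3/(b^2*(2-3*b))
      = (-125+379*a-256*a^2)/(4*(a-1)*(2-3*a))
        + (-125+379*b-256*b^2)/(4*(b-1)*(2-3*b)) + 23/(4*(1-a-b)) := by
  have hd1 : a^2*(a-1) ≠ 0 := mul_ne_zero (pow_ne_zero 2 ha) ha1
  have hd2 : a^2*(2-3*a) ≠ 0 := mul_ne_zero (pow_ne_zero 2 ha) h2a
  have hd3 : b^2*(2-3*b) ≠ 0 := mul_ne_zero (pow_ne_zero 2 hb) h2b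
  have hd4 : (4:ℂ)*(a-1)*(2-3*a) ≠ 0 :=
    mul_ne_zero (mul_ne_zero (by norm_num) ha1) h2a
  have hd5 : (4:ℂ)*(b-1)*(2-3*b) ≠ 0 :=
    mul_ne_zero (mul_ne_zero (by norm_num) hb1) h2b
  have hd6 : (4:ℂ)*(1-a-b) ≠ 0 := mul_ne_zero (by norm_num) hc
  rw [div_add_div _ _ hd1 hd2, div_add_div _ _ (mul_ne_zero hd1 hd2) hd3,
      div_add_div _ _ hd4 hd5, div_add_div _ _ (mul_ne_zero hd4 hd5) hd6,
      div_eq_div_iff (mul_ne_zero (mul_ne_zero hd1 hd2) hd3)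
        (mul_ne_zero (mul_ne_zero hd4 hd5) hd6)]
  linear_combination (16*a^2*(a-1)*(2-3*a)*(2-3*b) *
    (8*b - 20*b^2 + 12*b^3 - 8*a + 92*a*b - 200*a*b^2 + 120*a*b^3
    + 20*a^2 - 260*a^2*b + 575*a^2*b^2 - 345*a^2*b^3 - 12*a^3 + 156*a^3*b
    - 345*a^3*b^2 + 207*a^3*b^3)) * hR

noncomputable def gAux : ℂ → ℂ := fun u => (-125+379*u-256*u^2)/(4*(u-1)*(2-3*u))

theorem stmt_5 (u₁ u₂ u₃ : ℝ → ℂ)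
    (hroots : ∀ t : ℝ, t ≠ 0 → ∀ z : ℂ,
      z ^ 3 - z ^ 2 - (t : ℂ) = (z - u₁ t) * (z - u₂ t) * (z - u₃ t))
    (hlim₁ : Tendsto u₁ (𝓝[≠] (0 : ℝ)) (𝓝 0))
    (hlim₂ : Tendsto u₂ (𝓝[≠] (0 : ℝ)) (𝓝 0))
    (hlim₃ : Tendsto u₃ (𝓝[≠] (0 : ℝ)) (𝓝 1)) :
    Tendsto (fun t : ℝ =>
        1 / (t : ℂ) + (1 - 4 * u₁ t) ^ 3 / ((u₁ t) ^ 2 * (2 - 3 * u₁ t))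
          + (1 - 4 * u₂ t) ^ 3 / ((u₂ t) ^ 2 * (2 - 3 * u₂ t)))
      (𝓝[≠] (0 : ℝ)) (𝓝 37) := by
  have hgc : ContinuousAt gAux 0 := by
    apply ContinuousAt.div (by fun_prop) (by fun_prop)
    norm_num
  have hg1 : Tendsto (fun t => gAux (u₁ t)) (𝓝[≠] (0:ℝ)) (𝓝 (gAux 0)) :=
    hgc.tendsto.comp hlim₁
  have hg2 : Tendsto (fun t => gAux (u₂ t)) (𝓝[≠] (0:ℝ)) (𝓝 (gAux 0)) :=
    hgc.tendsto.comp hlim₂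
  have hg3 : Tendsto (fun t => (23:ℂ)/(4 * u₃ t)) (𝓝[≠] (0:ℝ)) (𝓝 (23/(4*1))) :=
    Tendsto.div tendsto_const_nhds (hlim₃.const_mul 4) (by norm_num)
  have main : Tendsto (fun t => gAux (u₁ t) + gAux (u₂ t) + 23/(4 * u₃ t))
      (𝓝[≠] (0:ℝ)) (𝓝 (gAux 0 + gAux 0 + 23/(4*1))) := (hg1.add hg2).add hg3
  have h37 : gAux 0 + gAux 0 + (23:ℂ)/(4*1) = 37 := by
    simp only [gAux]; norm_num
  rw [← h37]
  apply Tendsto.congr' _ main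
  have e1 : ∀ᶠ t in 𝓝[≠] (0:ℝ), dist (u₁ t) 0 < 1/2 :=
    Metric.tendsto_nhds.mp hlim₁ (1/2) (by norm_num)
  have e2 : ∀ᶠ t in 𝓝[≠] (0:ℝ), dist (u₂ t) 0 < 1/2 :=
    Metric.tendsto_nhds.mp hlim₂ (1/2) (by norm_num)
  have e3 : ∀ᶠ t in 𝓝[≠] (0:ℝ), dist (u₃ t) 1 < 1/2 :=
    Metric.tendsto_nhds.mp hlim₃ (1/2) (by norm_num)
  filter_upwards [e1, e2, e3, self_mem_nhdsWithin] with t h1 h2 h3 ht'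
  have ht : t ≠ 0 := ht'
  set a := u₁ t with hadef
  set b := u₂ t with hbdef
  set c := u₃ t with hcdef
  have ht0 : (t:ℂ) ≠ 0 := Complex.ofReal_ne_zero.mpr ht
  have hA := hroots t ht a
  have hB := hroots t ht b
  have h0 := hroots t ht 0
  have hp1 := hroots t ht 1
  have hm1 := hroots t ht (-1)
  have htt : (t:ℂ) = a^2*(a-1) := by linear_combination -hA
  have he1 : a + b + c = 1 := by linear_combination hp1/2 + hm1/2 - h0
  have he2 : a*b + a*c + b*c = 0 := by linear_combination (hm1 - hp1)/2
  have hR : a^2 + a*b + b^2 = a + b := by linear_combination (a+b)*he1 - he2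
  have htb : (t:ℂ) = b^2*(b-1) := by linear_combination -hB
  have ha : a ≠ 0 := fun h => ht0 (by rw [htt, h]; ring)
  have ha1 : a - 1 ≠ 0 := fun h => ht0 (by rw [htt, h, mul_zero])
  have hb : b ≠ 0 := fun h => ht0 (by rw [htb, h]; ring)
  have hb1 : b - 1 ≠ 0 := fun h => ht0 (by rw [htb, h, mul_zero])
  have hna : ‖a‖ < 1/2 := by rwa [dist_zero_right] at h1
  have hnb : ‖b‖ < 1/2 := by rwa [dist_zero_right] at h2
  have h2a : (2:ℂ) - 3*a ≠ 0 := by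
    intro h
    have h3 : ‖(2:ℂ)‖ = ‖(3:ℂ)*a‖ := by rw [show (2:ℂ) = 3*a by linear_combination h]
    rw [norm_mul] at h3
    simp only [Complex.norm_ofNat] at h3
    nlinarith
  have h2b : (2:ℂ) - 3*b ≠ 0 := by
    intro h
    have h3 : ‖(2:ℂ)‖ = ‖(3:ℂ)*b‖ := by rw [show (2:ℂ) = 3*b by linear_combination h]
    rw [norm_mul] at h3
    simp only [Complex.norm_ofNat] at h3
    nlinarith
  have hcc : (1:ℂ) - a - b = c := by linear_combination -he1
  have hc0 : (1:ℂ) - a - b ≠ 0 := by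
    rw [hcc]
    intro h
    rw [h] at h3
    norm_num [dist_eq_norm] at h3
  have := key a b ha hb ha1 hb1 h2a h2b hc0 hR
  rw [hcc] at this
  simp only [gAux]
  rw [← this, htt]
end

section
/- Let u₁, u₂ be the two roots of λ³ - λ² - t = 0 that converge to 0 as t → 0 (t ≠ 0). Then (1-4u₁)³/(u₁²(2-3u₁)) + (1-4u₂)³/(u₂²(2-3u₂)) + 1/t converges as t → 0; more precisely, writing the sum as a symmetric rational function in u₁, u₂ and using u₁ + u₂ = 1 - u₃, u₁u₂ = t/u₃ with u₃ → 1, the singular parts cancel. -/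
/-!
Writing `f(z) = z³ - z² - t`, each summand is `-(1 - 4u)³ / (u f'(u))`, i.e. minus the residue of
`ω = (1 - 4z)³ / (z f(z)) dz` at the root `u`. By the residue theorem the residues of `ω` at the
three roots, at `0` (namely `-1/t`) and at `∞` (namely `64`) add up to zero, so summing over all
three roots gives `64 - 1/t`. Hence the expression equals `64 - (1 - 4u₃)³ / (u₃² (2 - 3u₃))`,
which tends to `64 - 27 = 37` as `u₃ → 1`. After clearing denominators, the residue identity is
a polynomial identity modulo the Vieta relations `u₁ + u₂ + u₃ = 1`, `u₁u₂ + u₁u₃ + u₂u₃ = 0`.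
-/

open Filter Topology

theorem vieta_of_forall_cubic_eq {K : Type*} [Field K] [CharZero K] {s₁ s₂ s₃ a b c : K}
    (h : ∀ z : K, z ^ 3 - s₁ * z ^ 2 + s₂ * z - s₃ = (z - a) * (z - b) * (z - c)) :
    a + b + c = s₁ ∧ a * b + a * c + b * c = s₂ ∧ a * b * c = s₃ := by
  have h₀ := h 0
  have h₁ := h 1
  have hm := h (-1)
  refine ⟨?_, ?_, ?_⟩
  · linear_combination (h₁ + hm) / 2 - h₀
  · linear_combination (hm - h₁) / 2
  · linear_combination h₀

/-- `(2 - 3u)²` divides `27 (u³ - u²) + 4`: `2/3` is the double root of `z³ - z² + 4/27`. -/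
theorem two_sub_three_mul_ne_zero_of_cubic {K : Type*} [CommRing K] {t u : K}
    (hu : u ^ 3 - u ^ 2 = t) (ht : 27 * t + 4 ≠ 0) : 2 - 3 * u ≠ 0 := fun h =>
  ht (by linear_combination -27 * hu + (2 - 3 * u) * (3 * u + 1) * h)

def rootTerm {K : Type*} [Field K] (x : K) : K := (1 - 4 * x) ^ 3 / (x ^ 2 * (2 - 3 * x))

theorem numerator_identity_of_vieta {K : Type*} [Field K] {a b c : K}
    (h1 : a + b + c = 1) (h2 : a * b + a * c + b * c = 0) :
    ((1 - 4 * a) ^ 3 * (b ^ 2 * (2 - 3 * b)) + a ^ 2 * (2 - 3 * a) * (1 - 4 * b) ^ 3)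
        * (c ^ 2 * (2 - 3 * c)) + a ^ 2 * (2 - 3 * a) * (b ^ 2 * (2 - 3 * b)) * (1 - 4 * c) ^ 3
      = (64 * (a * b * c) - 1) * (a * b * c) * ((2 - 3 * a) * (2 - 3 * b) * (2 - 3 * c)) := by
  grind

theorem rootTerm_add_rootTerm_add_rootTerm {K : Type*} [Field K] {a b c : K}
    (ha : a ≠ 0) (hb : b ≠ 0) (hc : c ≠ 0)
    (h2a : 2 - 3 * a ≠ 0) (h2b : 2 - 3 * b ≠ 0) (h2c : 2 - 3 * c ≠ 0)
    (h1 : a + b + c = 1) (h2 : a * b + a * c + b * c = 0) :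
    rootTerm a + rootTerm b + rootTerm c = 64 - 1 / (a * b * c) := by
  have hA := mul_ne_zero (pow_ne_zero 2 ha) h2a
  have hB := mul_ne_zero (pow_ne_zero 2 hb) h2b
  have hC := mul_ne_zero (pow_ne_zero 2 hc) h2c
  rw [rootTerm, rootTerm, rootTerm, div_add_div _ _ hA hB, div_add_div _ _ (mul_ne_zero hA hB) hC,
    div_eq_iff (mul_ne_zero (mul_ne_zero hA hB) hC), numerator_identity_of_vieta h1 h2]
  field_simp

theorem rootTerm_add_rootTerm_add_one_div {K : Type*} [Field K] [CharZero K] {t a b c : K}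
    (h : ∀ z : K, z ^ 3 - z ^ 2 - t = (z - a) * (z - b) * (z - c))
    (ht : t ≠ 0) (ht' : 27 * t + 4 ≠ 0) :
    rootTerm a + rootTerm b + 1 / t = 64 - rootTerm c := by
  obtain ⟨h1, h2, h3⟩ := vieta_of_forall_cubic_eq (s₁ := 1) (s₂ := 0) (s₃ := t) fun z => by
    rw [← h z]; ring
  have hroot : ∀ x, (x - a) * (x - b) * (x - c) = 0 → x ^ 3 - x ^ 2 = t := fun x hx => by
    linear_combination h x + hx
  have hne : ∀ x, x ^ 3 - x ^ 2 = t → x ≠ 0 := fun x hx h0 => ht (by rw [← hx, h0]; ring)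
  have hra := hroot a (by ring)
  have hrb := hroot b (by ring)
  have hrc := hroot c (by ring)
  have hsum := rootTerm_add_rootTerm_add_rootTerm (hne a hra) (hne b hrb) (hne c hrc)
    (two_sub_three_mul_ne_zero_of_cubic hra ht') (two_sub_three_mul_ne_zero_of_cubic hrb ht')
    (two_sub_three_mul_ne_zero_of_cubic hrc ht') h1 h2
  rw [h3] at hsum
  linear_combination hsum

theorem tendsto_rootTerm_one {K : Type*} [NormedField K] :
    Tendsto rootTerm (𝓝 (1 : K)) (𝓝 27) := by
  have hcont : ContinuousAt (rootTerm (K := K)) 1 :=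
    (by fun_prop : Continuous fun x : K => (1 - 4 * x) ^ 3).continuousAt.div (by fun_prop)
      (by norm_num)
  convert hcont.tendsto using 2
  norm_num [rootTerm]

theorem stmt_11_general (u₁ u₂ u₃ : ℝ → ℂ)
    (hroots : ∀ t : ℝ, t ≠ 0 → ∀ z : ℂ,
      z ^ 3 - z ^ 2 - (t : ℂ) = (z - u₁ t) * (z - u₂ t) * (z - u₃ t))
    (hlim₃ : Tendsto u₃ (𝓝[≠] (0 : ℝ)) (𝓝 1)) :
    (∀ t : ℝ, t ≠ 0 → u₁ t * u₂ t = (t : ℂ) / u₃ t ∧ u₁ t + u₂ t = 1 - u₃ t) ∧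
      Tendsto (fun t : ℝ =>
          (1 - 4 * u₁ t) ^ 3 / ((u₁ t) ^ 2 * (2 - 3 * u₁ t))
            + (1 - 4 * u₂ t) ^ 3 / ((u₂ t) ^ 2 * (2 - 3 * u₂ t)) + 1 / (t : ℂ))
        (𝓝[≠] (0 : ℝ)) (𝓝 37) := by
  refine ⟨fun t ht => ?_, ?_⟩
  · obtain ⟨h1, -, h3⟩ := vieta_of_forall_cubic_eq (s₁ := 1) (s₂ := 0) (s₃ := (t : ℂ))
      fun z => by rw [← hroots t ht z]; ring
    have hu₃ : u₃ t ≠ 0 := right_ne_zero_of_mul (h3 ▸ Complex.ofReal_ne_zero.mpr ht)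
    exact ⟨eq_div_of_mul_eq hu₃ h3, by linear_combination h1⟩
  · have hsum : ∀ᶠ t in 𝓝[≠] (0 : ℝ),
        64 - rootTerm (u₃ t) = rootTerm (u₁ t) + rootTerm (u₂ t) + 1 / (t : ℂ) := by
      filter_upwards [self_mem_nhdsWithin,
        nhdsWithin_le_nhds (eventually_ne_nhds (by norm_num : (0 : ℝ) ≠ -4 / 27))] with t ht ht'
      refine (rootTerm_add_rootTerm_add_one_div (hroots t ht) (by exact_mod_cast ht) ?_).symm
      exact_mod_cast fun h => ht' (by linear_combination h / 27)
    have hlim := (tendsto_rootTerm_one.comp hlim₃).const_sub (64 : ℂ)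
    norm_num at hlim
    exact hlim.congr' hsum

theorem stmt_11 (u₁ u₂ u₃ : ℝ → ℂ)
    (hroots : ∀ t : ℝ, t ≠ 0 → ∀ z : ℂ,
      z ^ 3 - z ^ 2 - (t : ℂ) = (z - u₁ t) * (z - u₂ t) * (z - u₃ t))
    (hlim₁ : Tendsto u₁ (𝓝[≠] (0 : ℝ)) (𝓝 0))
    (hlim₂ : Tendsto u₂ (𝓝[≠] (0 : ℝ)) (𝓝 0))
    (hlim₃ : Tendsto u₃ (𝓝[≠] (0 : ℝ)) (𝓝 1)) :
    (∀ t : ℝ, t ≠ 0 → u₁ t * u₂ t = (t : ℂ) / u₃ t ∧ u₁ t + u₂ t = 1 - u₃ t) ∧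
      Tendsto (fun t : ℝ =>
          (1 - 4 * u₁ t) ^ 3 / ((u₁ t) ^ 2 * (2 - 3 * u₁ t))
            + (1 - 4 * u₂ t) ^ 3 / ((u₂ t) ^ 2 * (2 - 3 * u₂ t)) + 1 / (t : ℂ))
        (𝓝[≠] (0 : ℝ)) (𝓝 37) :=
  stmt_11_general u₁ u₂ u₃ hroots hlim₃
end
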